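/- Let v1, v2 > 0, let m be a positive integer, let 0 < b ≤ m, and let α ∈ (0, 1). If a strategy profile (X, Y) with E(X) = m + α and E(Y) = b is a Nash equilibrium of the two-player all-pay auction with valuations (v1, v2), then m(m+1)/b = v1/2, (X, Y) is a Nash equilibrium of the discrete General Lotto game Γ(m + α, b), and Y = (1 − b/m)·δ_0 + (b/m)·U_E^m. -/

import Mathlib

open scoped BigOperators

/-- A (mixed) strategy: a probability distribution on the nonnegative
integers with finite expectation. -/
structure Strategy where
  p : ℕ → ℝ
  nonneg : ∀ n, 0 ≤ p n
  total : HasSum p 1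
  finExp : Summable fun n : ℕ => (n : ℝ) * p n

namespace Strategy

/-- Expectation of a strategy. -/
noncomputable def exp (ξ : Strategy) : ℝ := ∑' n : ℕ, (n : ℝ) * ξ.p n

end Strategy

/-- Probability that an observation from `ξ` strictly exceeds an independent
observation from `η`. -/
noncomputable def prGT (ξ η : Strategy) : ℝ :=
  ∑' n, ξ.p n * ∑ k ∈ Finset.range n, η.p k

/-- Probability that independent observations from `ξ` and `η` are equal. -/
noncomputable def prEq (ξ η : Strategy) : ℝ := ∑' n, ξ.p n * η.p n

/-- Expected all-pay auction payoff of a player with valuation `v` playing `ξ`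
against `η`:  `v·Pr(X > Y) + (v/2)·Pr(X = Y) − E(X)`. -/
noncomputable def payoff (v : ℝ) (ξ η : Strategy) : ℝ :=
  v * prGT ξ η + v / 2 * prEq ξ η - ξ.exp

/-- Nash equilibrium of the two-player all-pay auction with valuations `(v1, v2)`. -/
def IsNashAPA (v1 v2 : ℝ) (X Y : Strategy) : Prop :=
  (∀ X' : Strategy, payoff v1 X' Y ≤ payoff v1 X Y) ∧
  (∀ Y' : Strategy, payoff v2 Y' X ≤ payoff v2 Y X)

/-- `H(ξ, η) = Pr(X > Y) − Pr(X < Y)`. -/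
noncomputable def Hval (ξ η : Strategy) : ℝ := prGT ξ η - prGT η ξ

/-- Nash equilibrium of the discrete General Lotto game `Γ(b1, b2)`. -/
def IsNashLotto (b1 b2 : ℝ) (X Y : Strategy) : Prop :=
  X.exp = b1 ∧ Y.exp = b2 ∧
  (∀ X' : Strategy, X'.exp = b1 → Hval X' Y ≤ Hval X Y) ∧
  (∀ Y' : Strategy, Y'.exp = b2 → Hval Y' X ≤ Hval Y X)

/-- `U_O^m`: uniform distribution on the odd numbers `{1, 3, …, 2m−1}` (as a pmf). -/
noncomputable def UO (m : ℕ) : ℕ → ℝ := fun n =>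
  if Odd n ∧ n < 2 * m then (m : ℝ)⁻¹ else 0

/-- `U_E^m`: uniform distribution on the even numbers `{0, 2, …, 2m}` (as a pmf). -/
noncomputable def UE (m : ℕ) : ℕ → ℝ := fun n =>
  if Even n ∧ n ≤ 2 * m then ((m : ℝ) + 1)⁻¹ else 0

/-- `U_{O↑1}^m`: uniform distribution on the even numbers `{2, 4, …, 2m−2}` (as a pmf). -/
noncomputable def UOup (m : ℕ) : ℕ → ℝ := fun n =>
  if Even n ∧ 0 < n ∧ n ≤ 2 * m - 2 then ((m : ℝ) - 1)⁻¹ else 0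

/-- `δ_j`: the point mass at `j` (as a pmf). -/
noncomputable def deltaFn (j : ℕ) : ℕ → ℝ := fun n => if n = j then 1 else 0

/-- `W_j^m = (1/(2m))·δ_0 + Σ_{i=1}^{j−1}(1/m)·δ_{2i} + (1/(2m))·δ_{2j}
      + Σ_{i=j+1}^{m}(1/m)·δ_{2i−1}` (as a pmf). -/
noncomputable def Wfn (j m : ℕ) : ℕ → ℝ := fun n =>
  if n = 0 ∨ n = 2 * j then (2 * (m : ℝ))⁻¹
  else if Even n ∧ n < 2 * j then (m : ℝ)⁻¹
  else if Odd n ∧ 2 * j < n ∧ n < 2 * m then (m : ℝ)⁻¹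
  else 0

/-- `V_j^m = Σ_{i=1}^{j−1}(2/(2m+1))·δ_{2i−1} + (1/(2m+1))·δ_{2j−1}
      + Σ_{i=j}^{m}(2/(2m+1))·δ_{2i}` (as a pmf). -/
noncomputable def Vfn (j m : ℕ) : ℕ → ℝ := fun n =>
  if n = 2 * j - 1 then (2 * (m : ℝ) + 1)⁻¹
  else if Odd n ∧ n < 2 * j - 1 then 2 * (2 * (m : ℝ) + 1)⁻¹
  else if Even n ∧ 2 * j ≤ n ∧ n ≤ 2 * m then 2 * (2 * (m : ℝ) + 1)⁻¹
  else 0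

/-! Write `score η n = Pr(η < n) + Pr(η ≤ n)`. Payoffs are affine in `Σ ξ(n) score η n`, so
an all-pay equilibrium is a General Lotto equilibrium, and the deviation of player 1 to a pure
bid `n` puts `score Y` below the line of slope `2 / v1` through `(E X, Σ X(n) score Y n)`.

Testing the equilibrium against `(1 - b/m) δ₀ + (b/m) U_E^m` and against a perturbation of the
strategy with cdf `g ⌊n/2⌋`, `g = (m + 1 - α) / (m (m + 1))`, pins the value of the Lotto game
down. By complementary slackness `score Y` then lies on that line at every bid in `[1, 2m+1]`,
since the perturbed strategy charges all of them, and `Y` vanishes at `1` and beyond `2m`, where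
the score of the perturbed strategy is strictly below `g n`. So `Y` puts mass `2 / v1` on each of
`2, 4, …, 2m` and none on the other positive bids, and its mean `b` forces
`2 / v1 = b / (m (m + 1))`. -/

open Finset Filter Topology

lemma Finset.sum_range_two_mul {M : Type*} [AddCommMonoid M] (f : ℕ → M) (k : ℕ) :
    ∑ n ∈ range (2 * k), f n = ∑ j ∈ range k, (f (2 * j) + f (2 * j + 1)) := by
  induction k with
  | zero => simp
  | succ k ih => rw [mul_add_one, sum_range_succ, sum_range_succ, ih, sum_range_succ, add_assoc]

lemma Finset.sum_range_mul_sub {R : Type*} [CommRing R] (F : ℕ → R) (N : ℕ) :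
    ∑ n ∈ range N, (n : R) * (F (n + 1) - F n) = ∑ n ∈ range N, (F N - F (n + 1)) := by
  induction N with
  | zero => simp
  | succ N ih =>
    rw [sum_range_succ, ih, sum_range_succ, sub_self, add_zero, sum_sub_distrib, sum_sub_distrib,
      sum_const, sum_const, card_range, nsmul_eq_mul, nsmul_eq_mul]
    ring

lemma eq_ite_even_of_add_succ_eq {u : ℕ → ℝ} {w : ℝ} {N : ℕ} (h1 : u 1 = 0)
    (hpair : ∀ n, 1 ≤ n → n < N → u n + u (n + 1) = w) {n : ℕ} (hn1 : 1 ≤ n)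
    (hnN : n ≤ N) :
    u n = if Even n then w else 0 := by
  induction n, hn1 using Nat.le_induction with
  | base => simp [h1]
  | succ n hn ih =>
    have hsum := hpair n hn (by omega)
    rw [ih (by omega)] at hsum
    simp only [Nat.even_add_one]
    split_ifs at hsum ⊢ <;> linarith

lemma hasSum_UE_mul (m : ℕ) (f : ℕ → ℝ) :
    HasSum (fun n => UE m n * f n) (((m : ℝ) + 1)⁻¹ * ∑ j ∈ range (m + 1), f (2 * j)) := by
  have hinj : Function.Injective (2 * · : ℕ → ℕ) := mul_right_injective₀ two_ne_zero
  have hodd : ∀ n ∉ Set.range (2 * · : ℕ → ℕ), UE m n * f n = 0 := fun n hn => by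
    have : ¬ Even n := fun ⟨k, hk⟩ => hn ⟨k, by simp only; omega⟩
    simp [UE, this]
  have hout : ∀ j ∉ range (m + 1), UE m (2 * j) * f (2 * j) = 0 := fun j hj => by
    simp only [mem_range, not_lt] at hj
    simp [UE, show ¬ 2 * j ≤ 2 * m by omega]
  have hin : ∀ j ∈ range (m + 1), UE m (2 * j) * f (2 * j) = ((m : ℝ) + 1)⁻¹ * f (2 * j) :=
    fun j hj => by simp [UE, Nat.lt_succ_iff.1 (mem_range.1 hj)]
  rw [← hinj.hasSum_iff hodd, mul_sum, ← sum_congr rfl hin]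
  exact hasSum_sum_of_ne_finset_zero (L := SummationFilter.unconditional ℕ) hout

noncomputable section

namespace Strategy

variable (ξ η : Strategy)

def cdf (n : ℕ) : ℝ := ∑ k ∈ range n, ξ.p k

/-- Twice the expected share of the prize won by the bid `n` against `η`, ties split evenly. -/
def score (n : ℕ) : ℝ := η.cdf n + η.cdf (n + 1)

def totalScore : ℝ := ∑' n, ξ.p n * η.score n

lemma cdf_succ (n : ℕ) : ξ.cdf (n + 1) = ξ.cdf n + ξ.p n := sum_range_succ _ n

lemma cdf_nonneg (n : ℕ) : 0 ≤ ξ.cdf n := sum_nonneg fun k _ => ξ.nonneg k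

lemma cdf_le_one (n : ℕ) : ξ.cdf n ≤ 1 := sum_le_hasSum _ (fun k _ => ξ.nonneg k) ξ.total

lemma p_le_one (n : ℕ) : ξ.p n ≤ 1 := le_hasSum ξ.total n fun k _ => ξ.nonneg k

lemma score_nonneg (n : ℕ) : 0 ≤ η.score n := add_nonneg (η.cdf_nonneg n) (η.cdf_nonneg _)

lemma score_le_two (n : ℕ) : η.score n ≤ 2 := by
  rw [score]; linarith [η.cdf_le_one n, η.cdf_le_one (n + 1)]

lemma score_succ_sub_score (n : ℕ) : η.score (n + 1) - η.score n = η.p n + η.p (n + 1) := by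
  simp only [score, cdf_succ]; ring

lemma summable_p_mul {f : ℕ → ℝ} {C : ℝ} (h0 : ∀ n, 0 ≤ f n) (hC : ∀ n, f n ≤ C) :
    Summable fun n => ξ.p n * f n :=
  (ξ.total.summable.mul_right C).of_nonneg_of_le (fun n => mul_nonneg (ξ.nonneg n) (h0 n))
    fun n => mul_le_mul_of_nonneg_left (hC n) (ξ.nonneg n)

lemma summable_mul_score : Summable fun n => ξ.p n * η.score n :=
  ξ.summable_p_mul η.score_nonneg η.score_le_two

lemma hasSum_mul_affine (c d : ℝ) :
    HasSum (fun n => ξ.p n * (c + d * n)) (c + d * ξ.exp) := by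
  have hf : (fun n : ℕ => ξ.p n * (c + d * n)) = fun n => c * ξ.p n + d * (n * ξ.p n) :=
    funext fun n => by ring
  have h := (ξ.total.mul_left c).add (ξ.finExp.hasSum.mul_left d)
  rw [mul_one] at h
  rw [hf]
  exact h

lemma totalScore_eq : ξ.totalScore η = 2 * prGT ξ η + prEq ξ η := by
  have h : ∀ n, ξ.p n * η.score n = 2 * (ξ.p n * η.cdf n) + ξ.p n * η.p n := fun n => by
    simp only [score, cdf_succ]; ring
  rw [totalScore, tsum_congr h,
    ((ξ.summable_p_mul η.cdf_nonneg η.cdf_le_one).mul_left 2).tsum_add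
      (ξ.summable_p_mul η.nonneg η.p_le_one), tsum_mul_left]
  rfl

/-- The partial sums telescope to `2 F_ξ(N) F_η(N)`, which tends to `2`. -/
lemma totalScore_add_totalScore : ξ.totalScore η + η.totalScore ξ = 2 := by
  have hpartial : ∀ N, ∑ n ∈ range N, (ξ.p n * η.score n + η.p n * ξ.score n)
      = 2 * (ξ.cdf N * η.cdf N) := by
    intro N
    induction N with
    | zero => simp [cdf]
    | succ N ih => rw [sum_range_succ, ih]; simp only [score, cdf_succ]; ring
  have hlim : Tendsto (fun N => 2 * (ξ.cdf N * η.cdf N)) atTop (𝓝 2) := by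
    have := (ξ.total.tendsto_sum_nat.mul η.total.tendsto_sum_nat).const_mul 2
    rwa [mul_one, mul_one] at this
  have hsum := (ξ.summable_mul_score η).add (η.summable_mul_score ξ)
  rw [totalScore, totalScore, ← (ξ.summable_mul_score η).tsum_add (η.summable_mul_score ξ)]
  exact tendsto_nhds_unique hsum.hasSum.tendsto_sum_nat (by simpa only [hpartial] using hlim)

lemma Hval_eq : Hval ξ η = ξ.totalScore η - 1 := by
  have hcomm : prEq η ξ = prEq ξ η := tsum_congr fun n => mul_comm _ _
  have h := ξ.totalScore_add_totalScore η
  rw [totalScore_eq, totalScore_eq, hcomm] at h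
  rw [Hval, totalScore_eq]
  linarith

lemma payoff_eq (v : ℝ) : payoff v ξ η = v / 2 * ξ.totalScore η - ξ.exp := by
  rw [payoff, totalScore_eq]; ring

lemma totalScore_le_of_score_le {c d : ℝ} (h : ∀ n, η.score n ≤ c + d * n) :
    ξ.totalScore η ≤ c + d * ξ.exp :=
  hasSum_le (fun n => mul_le_mul_of_nonneg_left (h n) (ξ.nonneg n))
    (ξ.summable_mul_score η).hasSum (ξ.hasSum_mul_affine c d)

lemma score_eq_of_le_totalScore {c d : ℝ} (h : ∀ n, η.score n ≤ c + d * n)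
    (hge : c + d * ξ.exp ≤ ξ.totalScore η) {n : ℕ} (hn : ξ.p n ≠ 0) :
    η.score n = c + d * n := by
  have hgap : HasSum (fun k => ξ.p k * (c + d * k) - ξ.p k * η.score k)
      (c + d * ξ.exp - ξ.totalScore η) :=
    (ξ.hasSum_mul_affine c d).sub (ξ.summable_mul_score η).hasSum
  have hnonneg : ∀ k, 0 ≤ ξ.p k * (c + d * k) - ξ.p k * η.score k := fun k =>
    sub_nonneg.2 (mul_le_mul_of_nonneg_left (h k) (ξ.nonneg k))
  have hzero : c + d * ξ.exp - ξ.totalScore η = 0 :=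
    le_antisymm (by linarith) (hgap.nonneg hnonneg)
  rw [hzero, hasSum_zero_iff_of_nonneg hnonneg] at hgap
  have hterm := congrFun hgap n
  rw [Pi.zero_apply, ← mul_sub, mul_eq_zero, sub_eq_zero] at hterm
  exact (hterm.resolve_left hn).symm

lemma p_eq_zero_of_score_lt {c d : ℝ} (h : ∀ n, η.score n ≤ c + d * n)
    (hge : c + d * ξ.exp ≤ ξ.totalScore η) {n : ℕ} (hlt : η.score n < c + d * n) :
    ξ.p n = 0 :=
  by_contra fun hn => hlt.ne (score_eq_of_le_totalScore ξ η h hge hn)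

def pointMass (j : ℕ) : Strategy where
  p := deltaFn j
  nonneg n := by unfold deltaFn; split_ifs <;> norm_num
  total := hasSum_ite_eq j 1
  finExp := summable_of_ne_finset_zero (s := {j}) fun n hn => by
    simp [deltaFn, Finset.mem_singleton.not.1 hn]

lemma exp_pointMass (j : ℕ) : (pointMass j).exp = j := by
  rw [exp, tsum_eq_single j fun n hn => by simp [pointMass, deltaFn, hn]]
  simp [pointMass, deltaFn]

lemma totalScore_pointMass (j : ℕ) : (pointMass j).totalScore η = η.score j := by
  rw [totalScore, tsum_eq_single j fun n hn => by simp [pointMass, deltaFn, hn]]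
  simp [pointMass, deltaFn]

lemma score_le_of_forall_payoff_le {v : ℝ} (hv : 0 < v)
    (h : ∀ ξ' : Strategy, payoff v ξ' η ≤ payoff v ξ η) (n : ℕ) :
    η.score n ≤ (ξ.totalScore η - 2 / v * ξ.exp) + 2 / v * n := by
  have hn := h (pointMass n)
  rw [payoff_eq, payoff_eq, totalScore_pointMass, exp_pointMass] at hn
  calc η.score n = 2 / v * (v / 2 * η.score n - n) + 2 / v * n := by field_simp; ring
    _ ≤ 2 / v * (v / 2 * ξ.totalScore η - ξ.exp) + 2 / v * n := by gcongr
    _ = (ξ.totalScore η - 2 / v * ξ.exp) + 2 / v * n := by field_simp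

lemma Hval_le_of_payoff_le {v : ℝ} (hv : 0 < v) {ξ' : Strategy} (hexp : ξ'.exp = ξ.exp)
    (h : payoff v ξ' η ≤ payoff v ξ η) : Hval ξ' η ≤ Hval ξ η := by
  rw [payoff_eq, payoff_eq, hexp, sub_le_sub_iff_right,
    mul_le_mul_iff_of_pos_left (half_pos hv)] at h
  rw [Hval_eq, Hval_eq]
  linarith

def mix (t : ℝ) (ht0 : 0 ≤ t) (ht1 : t ≤ 1) (ξ η : Strategy) : Strategy where
  p n := (1 - t) * ξ.p n + t * η.p n
  nonneg n :=
    add_nonneg (mul_nonneg (sub_nonneg.2 ht1) (ξ.nonneg n)) (mul_nonneg ht0 (η.nonneg n))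
  total := by simpa using (ξ.total.mul_left (1 - t)).add (η.total.mul_left t)
  finExp := ((ξ.finExp.mul_left (1 - t)).add (η.finExp.mul_left t)).congr fun n => by ring

section mix

variable {t : ℝ} (ht0 : 0 ≤ t) (ht1 : t ≤ 1)

lemma exp_mix : (mix t ht0 ht1 ξ η).exp = (1 - t) * ξ.exp + t * η.exp := by
  have hf : (fun n : ℕ => (n : ℝ) * (mix t ht0 ht1 ξ η).p n)
      = fun n => (1 - t) * (n * ξ.p n) + t * (n * η.p n) := funext fun n => by
    simp only [mix]; ring
  rw [exp, hf]
  exact ((ξ.finExp.hasSum.mul_left (1 - t)).add (η.finExp.hasSum.mul_left t)).tsum_eq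

lemma score_mix (n : ℕ) :
    (mix t ht0 ht1 ξ η).score n = (1 - t) * ξ.score n + t * η.score n := by
  simp only [score, cdf, mix, sum_add_distrib, ← mul_sum]
  ring

end mix

def uniformEven (m : ℕ) : Strategy where
  p := UE m
  nonneg n := by unfold UE; split_ifs <;> positivity
  total := by
    have h := hasSum_UE_mul m 1
    simp only [Pi.one_apply, mul_one, sum_const, card_range, nsmul_eq_mul] at h
    rwa [Nat.cast_add_one, inv_mul_cancel₀ (by positivity)] at h
  finExp := (hasSum_UE_mul m _).summable.congr fun n => mul_comm _ _

lemma exp_uniformEven (m : ℕ) : (uniformEven m).exp = m := by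
  have h := hasSum_UE_mul m (fun n => n)
  have hgauss : ∑ j ∈ range (m + 1), ((2 * j : ℕ) : ℝ) = (m + 1) * m := by
    rw [← Nat.cast_sum, ← mul_sum, mul_comm, sum_range_id_mul_two]
    push_cast; ring
  rw [hgauss, inv_mul_cancel_left₀ (by positivity)] at h
  exact (h.congr_fun fun n => mul_comm _ _).tsum_eq

lemma cdf_uniformEven_le (m n : ℕ) :
    (uniformEven m).cdf n ≤ ((n + 1) / 2 : ℕ) / ((m : ℝ) + 1) := by
  induction n with
  | zero => simp [cdf]
  | succ n ih =>
    rw [cdf_succ]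
    rcases Nat.even_or_odd n with hn | hn
    · have hle : (uniformEven m).p n ≤ ((m : ℝ) + 1)⁻¹ := by
        simp only [uniformEven, UE]; split_ifs; exacts [le_rfl, by positivity]
      have hcount : (n + 1 + 1) / 2 = (n + 1) / 2 + 1 := by obtain ⟨k, rfl⟩ := hn; omega
      rw [hcount, Nat.cast_add_one, add_div, one_div]
      linarith
    · have hzero : (uniformEven m).p n = 0 := by
        simp [uniformEven, UE, Nat.not_even_iff_odd.2 hn]
      have hcount : (n + 1 + 1) / 2 = (n + 1) / 2 := by obtain ⟨k, rfl⟩ := hn; omega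
      rw [hcount, hzero, add_zero]
      exact ih

lemma score_uniformEven_le (m n : ℕ) : (uniformEven m).score n ≤ (n + 1) / ((m : ℝ) + 1) := by
  have hcount : ((n + 1) / 2 + (n + 1 + 1) / 2 : ℕ) = n + 1 := by omega
  calc (uniformEven m).score n
      ≤ ((n + 1) / 2 : ℕ) / ((m : ℝ) + 1) + ((n + 1 + 1) / 2 : ℕ) / ((m : ℝ) + 1) :=
        add_le_add (cdf_uniformEven_le m n) (cdf_uniformEven_le m (n + 1))
    _ = (n + 1) / ((m : ℝ) + 1) := by rw [← add_div, ← Nat.cast_add, hcount]; push_cast; ring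

/-- Against `(1 - t) δ₀ + t U_E^m` every bid `n` scores at most
`2 (1 - t) + t (n + 1) / (m + 1)`. -/
lemma totalScore_mix_uniformEven_le {t : ℝ} (ht0 : 0 ≤ t) (ht1 : t ≤ 1) (m : ℕ)
    (ξ : Strategy) :
    ξ.totalScore (mix t ht0 ht1 (pointMass 0) (uniformEven m))
      ≤ 2 - t * (2 * m + 1 - ξ.exp) / (m + 1) := by
  have hbound : ∀ n : ℕ, (mix t ht0 ht1 (pointMass 0) (uniformEven m)).score n
      ≤ (2 * (1 - t) + t / (m + 1)) + t / (m + 1) * n := fun n => by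
    rw [score_mix]
    have h1 := mul_le_mul_of_nonneg_left ((pointMass 0).score_le_two n) (sub_nonneg.2 ht1)
    have h2 := mul_le_mul_of_nonneg_left (score_uniformEven_le m n) ht0
    calc _ ≤ (1 - t) * 2 + t * ((n + 1) / ((m : ℝ) + 1)) := add_le_add h1 h2
      _ = _ := by ring
  calc _ ≤ _ := totalScore_le_of_score_le ξ _ hbound
    _ = _ := by field_simp; ring

section ofCdf

lemma succ_sub_eq_zero_of_notMem_range {F : ℕ → ℝ} {N n : ℕ} (htop : ∀ n, N ≤ n → F n = 1)
    (hn : n ∉ range N) : F (n + 1) - F n = 0 := by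
  rw [mem_range, not_lt] at hn
  rw [htop n hn, htop (n + 1) (by omega), sub_self]

variable (F : ℕ → ℝ) (N : ℕ) (hmono : Monotone F) (h0 : F 0 = 0)
  (htop : ∀ n, N ≤ n → F n = 1)

def ofCdf : Strategy where
  p n := F (n + 1) - F n
  nonneg n := sub_nonneg.2 (hmono n.le_succ)
  total := by
    have h := hasSum_sum_of_ne_finset_zero (L := SummationFilter.unconditional ℕ)
      fun n hn => succ_sub_eq_zero_of_notMem_range htop hn
    rwa [sum_range_sub, htop N le_rfl, h0, sub_zero] at h
  finExp := summable_of_ne_finset_zero (s := range N) fun n hn => by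
    rw [succ_sub_eq_zero_of_notMem_range htop hn, mul_zero]

lemma cdf_ofCdf (n : ℕ) : (ofCdf F N hmono h0 htop).cdf n = F n := by
  rw [cdf]
  simp only [ofCdf]
  rw [sum_range_sub, h0, sub_zero]

lemma exp_ofCdf : (ofCdf F N hmono h0 htop).exp = ∑ n ∈ range N, (1 - F n) - 1 := by
  rw [exp, tsum_eq_sum (s := range N) fun n hn => by
    simp only [ofCdf]; rw [succ_sub_eq_zero_of_notMem_range htop hn, mul_zero]]
  simp only [ofCdf]
  have hshift := sum_range_succ' (fun n => 1 - F n) N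
  rw [sum_range_succ, htop N le_rfl, h0] at hshift
  rw [sum_range_mul_sub, htop N le_rfl]
  linarith

end ofCdf

/-- The cdf `n ↦ g ⌊n/2⌋` of an optimal General Lotto strategy with a small alternating
perturbation `∓ d` on `[2, 2m+1]`, which puts mass on every bid in `[1, 2m+1]`. -/
def dipCdf (m : ℕ) (g d : ℝ) (n : ℕ) : ℝ :=
  if n ≤ 1 then 0 else if n ≤ 2 * m + 1 then g * (n / 2 : ℕ) - d * (-1) ^ n else 1

structure DipAdmissible (m : ℕ) (g d : ℝ) : Prop where
  one_le : 1 ≤ m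
  pos : 0 < d
  two_mul_lt : 2 * d < g
  mul_add_lt_one : g * m + d < 1
  add_one_lt : d + 1 < g * (m + 1)

section dip

variable {m : ℕ} {g d : ℝ} {n : ℕ}

lemma dipCdf_of_le_one (hn : n ≤ 1) : dipCdf m g d n = 0 := if_pos hn

lemma dipCdf_of_two_le (h2 : 2 ≤ n) (hn : n ≤ 2 * m + 1) :
    dipCdf m g d n = g * (n / 2 : ℕ) - d * (-1) ^ n := by
  rw [dipCdf, if_neg (by omega), if_pos hn]

lemma dipCdf_of_lt (hn : 2 * m + 1 < n) : dipCdf m g d n = 1 := by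
  rw [dipCdf, if_neg (by omega), if_neg (by omega)]

lemma dipCdf_add_dipCdf_succ (h2 : 2 ≤ n) (hn : n ≤ 2 * m) :
    dipCdf m g d n + dipCdf m g d (n + 1) = g * n := by
  rw [dipCdf_of_two_le h2 (by omega), dipCdf_of_two_le (by omega) (by omega), pow_succ]
  have hfloor : ((n / 2 : ℕ) : ℝ) + ((n + 1) / 2 : ℕ) = n := by
    exact_mod_cast (by omega : n / 2 + (n + 1) / 2 = n)
  linear_combination g * hfloor

lemma dipCdf_top (h : DipAdmissible m g d) : dipCdf m g d (2 * m + 1) = g * m + d := by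
  rw [dipCdf_of_two_le (by linarith [h.one_le]) le_rfl, Odd.neg_one_pow ⟨m, rfl⟩,
    show (2 * m + 1) / 2 = m by omega]
  ring

lemma dipCdf_lt_succ (h : DipAdmissible m g d) (h1 : 1 ≤ n) (hn : n ≤ 2 * m + 1) :
    dipCdf m g d n < dipCdf m g d (n + 1) := by
  have hd := h.pos
  have hdg := h.two_mul_lt
  rcases (show n = 1 ∨ n = 2 * m + 1 ∨ (2 ≤ n ∧ n ≤ 2 * m) by omega)
    with rfl | rfl | ⟨h2, hn⟩
  · rw [dipCdf_of_le_one le_rfl, dipCdf_of_two_le le_rfl (by linarith [h.one_le])]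
    norm_num
    linarith
  · rw [dipCdf_top h, dipCdf_of_lt (by omega)]
    exact h.mul_add_lt_one
  · rw [dipCdf_of_two_le h2 (by omega), dipCdf_of_two_le (by omega) (by omega)]
    rcases Nat.even_or_odd n with hev | hodd
    · rw [hev.neg_one_pow, (hev.add_one).neg_one_pow,
        show (n + 1) / 2 = n / 2 by obtain ⟨k, rfl⟩ := hev; omega]
      linarith
    · rw [hodd.neg_one_pow, (hodd.add_one).neg_one_pow,
        show (n + 1) / 2 = n / 2 + 1 by obtain ⟨k, rfl⟩ := hodd; omega]
      push_cast
      linarith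

lemma dipCdf_monotone (h : DipAdmissible m g d) : Monotone (dipCdf m g d) := by
  refine monotone_nat_of_le_succ fun n => ?_
  rcases (show n = 0 ∨ (1 ≤ n ∧ n ≤ 2 * m + 1) ∨ 2 * m + 1 < n by omega)
    with rfl | ⟨h1, hn⟩ | hn
  · rw [dipCdf_of_le_one (Nat.zero_le 1), dipCdf_of_le_one le_rfl]
  · exact (dipCdf_lt_succ h h1 hn).le
  · rw [dipCdf_of_lt hn, dipCdf_of_lt (by omega)]

lemma dipCdf_add_dipCdf_succ_lt (h : DipAdmissible m g d) (hn : n = 1 ∨ 2 * m + 1 ≤ n) :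
    dipCdf m g d n + dipCdf m g d (n + 1) < g * n := by
  have hd := h.pos
  have hdg := h.two_mul_lt
  have hslope := h.add_one_lt
  rcases (show n = 1 ∨ n = 2 * m + 1 ∨ 2 * m + 2 ≤ n by omega) with rfl | rfl | hn
  · rw [dipCdf_of_le_one le_rfl, dipCdf_of_two_le le_rfl (by linarith [h.one_le])]
    norm_num
    linarith
  · rw [dipCdf_top h, dipCdf_of_lt (by omega)]
    push_cast
    linarith
  · rw [dipCdf_of_lt (by omega), dipCdf_of_lt (by omega)]
    have hn' : (2 * m + 2 : ℝ) ≤ n := by exact_mod_cast hn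
    nlinarith

lemma dipCdf_add_dipCdf_succ_le (h : DipAdmissible m g d) (n : ℕ) :
    dipCdf m g d n + dipCdf m g d (n + 1) ≤ g * n := by
  rcases (show n = 0 ∨ (2 ≤ n ∧ n ≤ 2 * m) ∨ (n = 1 ∨ 2 * m + 1 ≤ n) by omega)
    with rfl | ⟨h2, hn⟩ | hn
  · simp [dipCdf_of_le_one]
  · exact (dipCdf_add_dipCdf_succ h2 hn).le
  · exact (dipCdf_add_dipCdf_succ_lt h hn).le

def dipStrategy (h : DipAdmissible m g d) : Strategy :=
  ofCdf (dipCdf m g d) (2 * m + 2) (dipCdf_monotone h) (dipCdf_of_le_one (Nat.zero_le 1))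
    fun _ hn => dipCdf_of_lt (by omega)

variable (h : DipAdmissible m g d)

lemma score_dipStrategy (n : ℕ) :
    (dipStrategy h).score n = dipCdf m g d n + dipCdf m g d (n + 1) := by
  rw [score, dipStrategy, cdf_ofCdf, cdf_ofCdf]

lemma p_dipStrategy_pos (h1 : 1 ≤ n) (hn : n ≤ 2 * m + 1) : 0 < (dipStrategy h).p n :=
  sub_pos.2 (dipCdf_lt_succ h h1 hn)

lemma exp_dipStrategy : (dipStrategy h).exp = 2 * m + 1 - g * m * (m + 1) := by
  have hpair : ∀ j ∈ range (m + 1),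
      (1 - dipCdf m g d (2 * j)) + (1 - dipCdf m g d (2 * j + 1)) = 2 - 2 * g * j := by
    intro j hj
    rcases Nat.eq_zero_or_pos j with rfl | hj0
    · norm_num [dipCdf_of_le_one]
    · have := dipCdf_add_dipCdf_succ (g := g) (d := d) (show 2 ≤ 2 * j by omega)
        (show 2 * j ≤ 2 * m by have := mem_range.1 hj; omega)
      push_cast at this
      linarith
  have hgauss : (∑ j ∈ range (m + 1), (j : ℝ)) * 2 = (m + 1) * m := by
    have := sum_range_id_mul_two (m + 1)
    rw [Nat.add_sub_cancel] at this
    rw [← Nat.cast_sum]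
    exact_mod_cast this
  rw [dipStrategy, exp_ofCdf, show 2 * m + 2 = 2 * (m + 1) by ring, sum_range_two_mul,
    sum_congr rfl hpair, sum_sub_distrib, ← mul_sum, sum_const, card_range, nsmul_eq_mul]
  push_cast
  linear_combination (-g) * hgauss

end dip

lemma p_eq_of_score_eq_affine {Y : Strategy} {m : ℕ} {c w : ℝ}
    (hline : ∀ n, 1 ≤ n → n ≤ 2 * m + 1 → Y.score n = c + w * n) (h1 : Y.p 1 = 0)
    (htop : ∀ n, 2 * m + 1 ≤ n → Y.p n = 0) {n : ℕ} (hn : n ≠ 0) :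
    Y.p n = (m + 1) * w * UE m n := by
  have hpair : ∀ k, 1 ≤ k → k < 2 * m + 1 → Y.p k + Y.p (k + 1) = w := fun k hk1 hk => by
    rw [← score_succ_sub_score, hline k hk1 hk.le, hline (k + 1) (by omega) hk]
    push_cast; ring
  have hm : (m : ℝ) + 1 ≠ 0 := by positivity
  by_cases hnm : n ≤ 2 * m + 1
  · rw [eq_ite_even_of_add_succ_eq h1 hpair (by omega) hnm, UE]
    by_cases hev : Even n
    · have : n ≤ 2 * m := by obtain ⟨k, rfl⟩ := hev; omega
      rw [if_pos hev, if_pos ⟨hev, this⟩]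
      field_simp
    · rw [if_neg hev, if_neg fun h => hev h.1, mul_zero]
  · rw [htop n (by omega), UE, if_neg (by omega), mul_zero]

lemma exp_eq_mul_of_p_eq {ξ η : Strategy} {t : ℝ} (h : ∀ n ≠ 0, ξ.p n = t * η.p n) :
    ξ.exp = t * η.exp := by
  rw [exp, exp, ← tsum_mul_left]
  refine tsum_congr fun n => ?_
  rcases eq_or_ne n 0 with rfl | hn
  · simp
  · rw [h n hn]; ring

lemma p_eq_of_forall_ne {ξ η : Strategy} (j : ℕ) (h : ∀ n ≠ j, ξ.p n = η.p n) :
    ξ.p = η.p := by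
  have hupdate : ξ.p = Function.update η.p j (ξ.p j) := by
    funext n
    rcases eq_or_ne n j with rfl | hn
    · simp
    · simp [hn, h n hn]
  have hj := (η.total.update j (ξ.p j)).unique (hupdate ▸ ξ.total)
  rw [hupdate, show ξ.p j = η.p j by linarith, Function.update_eq_self]

lemma dipAdmissible {m : ℕ} {α : ℝ} (hm : 1 ≤ m) (hα0 : 0 < α) (hα1 : α < 1) :
    DipAdmissible m ((m + 1 - α) / (m * (m + 1))) (α * (1 - α) / (4 * m)) := by
  have hm1 : (1 : ℝ) ≤ m := by exact_mod_cast hm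
  have hm0 : (0 : ℝ) < m := by linarith
  refine ⟨hm, by positivity, ?_, ?_, ?_⟩
  · have hgap : 0 < 2 * (m + 1 - α) - α * (1 - α) * (m + 1) := by
      nlinarith [mul_pos hα0 (sub_pos.2 hα1), mul_pos hα0 hα0]
    rw [← mul_div_assoc, div_lt_div_iff₀ (by positivity) (by positivity)]
    nlinarith [mul_pos hm0 hgap]
  · rw [div_mul_eq_mul_div, div_add_div _ _ (by positivity) (by positivity),
      div_lt_one (by positivity)]
    nlinarith [mul_pos hα0 (sub_pos.2 hα1), mul_pos hm0 hα0]
  · rw [div_mul_eq_mul_div, div_add_one (by positivity),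
      div_lt_div_iff₀ (by positivity) (by positivity)]
    nlinarith [mul_pos (mul_pos (mul_pos hm0 (by linarith : (0 : ℝ) < m + 1)) (sub_pos.2 hα1))
      (by linarith : (0 : ℝ) < 4 - α)]

lemma exists_dipStrategy {m : ℕ} {α : ℝ} (hm : 1 ≤ m) (hα0 : 0 < α) (hα1 : α < 1) :
    ∃ X' : Strategy, X'.exp = m + α ∧
      (∀ n : ℕ, X'.score n ≤ (m + 1 - α) / (m * (m + 1)) * n) ∧
      (∀ n : ℕ, n = 1 ∨ 2 * m + 1 ≤ n → X'.score n < (m + 1 - α) / (m * (m + 1)) * n) ∧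
      ∀ n, 1 ≤ n → n ≤ 2 * m + 1 → X'.p n ≠ 0 := by
  have h := dipAdmissible hm hα0 hα1
  have hm0 : (0 : ℝ) < m := by exact_mod_cast hm
  refine ⟨dipStrategy h, ?_, fun n => ?_, fun n hn => ?_,
    fun n h1 hn => (p_dipStrategy_pos h h1 hn).ne'⟩
  · rw [exp_dipStrategy]
    field_simp
    ring
  · rw [score_dipStrategy]
    exact dipCdf_add_dipCdf_succ_le h n
  · rw [score_dipStrategy]
    exact dipCdf_add_dipCdf_succ_lt h hn

end Strategy

end

open Strategy

lemma IsNashAPA.isNashLotto {v1 v2 : ℝ} {X Y : Strategy} (hv1 : 0 < v1) (hv2 : 0 < v2)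
    (h : IsNashAPA v1 v2 X Y) : IsNashLotto X.exp Y.exp X Y :=
  ⟨rfl, rfl, fun X' hX' => Hval_le_of_payoff_le X Y hv1 hX' (h.1 X'),
    fun Y' hY' => Hval_le_of_payoff_le Y X hv2 hY' (h.2 Y')⟩

lemma IsNashLotto.totalScore_eq_of_score_le {m : ℕ} {α b : ℝ} {X Y X' : Strategy}
    (hm : 1 ≤ m) (hb0 : 0 ≤ b) (hbm : b ≤ m) (hL : IsNashLotto (m + α) b X Y) (hX' : X'.exp = m + α)
    (hX'le : ∀ n : ℕ, X'.score n ≤ (m + 1 - α) / (m * (m + 1)) * n) :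
    X'.totalScore Y = X.totalScore Y ∧ Y.totalScore X' = (m + 1 - α) / (m * (m + 1)) * b := by
  have hm0 : (0 : ℝ) < m := by exact_mod_cast hm
  have ht0 : 0 ≤ b / m := div_nonneg hb0 hm0.le
  have ht1 : b / m ≤ 1 := (div_le_one hm0).2 hbm
  have hYs : (mix (b / m) ht0 ht1 (pointMass 0) (uniformEven m)).exp = b := by
    rw [exp_mix, exp_pointMass, exp_uniformEven]
    field_simp
    ring
  have hX'opt := hL.2.2.1 X' hX'
  have hYsopt := hL.2.2.2 _ hYs
  rw [Hval_eq, Hval_eq] at hX'opt hYsopt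
  have hYsbound := totalScore_mix_uniformEven_le ht0 ht1 m X
  have hX'bound := totalScore_le_of_score_le Y X' fun n => (hX'le n).trans_eq (zero_add _).symm
  rw [hL.1] at hYsbound
  rw [hL.2.1, zero_add] at hX'bound
  have hgb : b / m * (2 * m + 1 - (m + α)) / (m + 1) = (m + 1 - α) / (m * (m + 1)) * b := by
    field_simp
    ring
  constructor <;> linarith [totalScore_add_totalScore X Y, totalScore_add_totalScore X' Y,
    totalScore_add_totalScore X (mix (b / m) ht0 ht1 (pointMass 0) (uniformEven m))]

/-- Lemma 8.1: necessary conditions for an equilibrium with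
`E(X) = m + α`, `E(Y) = b`, `0 < b ≤ m`, `α ∈ (0,1)`. -/
theorem allpay_lemma81 (v1 v2 : ℝ) (hv1 : 0 < v1) (hv2 : 0 < v2)
    (m : ℕ) (hm : 1 ≤ m) (b α : ℝ) (hb0 : 0 < b) (hbm : b ≤ (m : ℝ))
    (hα0 : 0 < α) (hα1 : α < 1)
    (X Y : Strategy) (hX : X.exp = (m : ℝ) + α) (hY : Y.exp = b)
    (h : IsNashAPA v1 v2 X Y) :
    (m : ℝ) * ((m : ℝ) + 1) / b = v1 / 2 ∧
    IsNashLotto ((m : ℝ) + α) b X Y ∧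
    (∀ n, Y.p n = (1 - b / (m : ℝ)) * deltaFn 0 n + (b / (m : ℝ)) * UE m n) := by
  have hm0 : (0 : ℝ) < m := by exact_mod_cast hm
  have hL : IsNashLotto ((m : ℝ) + α) b X Y := hX ▸ hY ▸ h.isNashLotto hv1 hv2
  obtain ⟨X', hX', hX'le, hX'lt, hX'pos⟩ := exists_dipStrategy hm hα0 hα1
  obtain ⟨hX'Y, hYX'⟩ := hL.totalScore_eq_of_score_le hm hb0.le hbm hX' hX'le
  have hline : ∀ n, 1 ≤ n → n ≤ 2 * m + 1 →
      Y.score n = (X.totalScore Y - 2 / v1 * X.exp) + 2 / v1 * n := fun n h1 hn =>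
    score_eq_of_le_totalScore X' Y (score_le_of_forall_payoff_le X Y hv1 h.1)
      (by rw [hX', ← hX, hX'Y]; linarith) (hX'pos n h1 hn)
  have hvanish : ∀ n, n = 1 ∨ 2 * m + 1 ≤ n → Y.p n = 0 := fun n hn =>
    p_eq_zero_of_score_lt Y X' (fun k => (hX'le k).trans_eq (zero_add _).symm)
      (by rw [hY, hYX', zero_add]) ((hX'lt n hn).trans_eq (zero_add _).symm)
  have hYp : ∀ n ≠ 0, Y.p n = (m + 1) * (2 / v1) * (uniformEven m).p n := fun n hn =>
    p_eq_of_score_eq_affine hline (hvanish 1 (.inl rfl)) (fun k hk => hvanish k (.inr hk)) hn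
  have ht : ((m : ℝ) + 1) * (2 / v1) = b / m := by
    have hexp := exp_eq_mul_of_p_eq hYp
    rw [hY, exp_uniformEven] at hexp
    rw [eq_div_iff hm0.ne', hexp]
  have hYeq : Y.p = (mix (b / m) (by positivity) ((div_le_one hm0).2 hbm) (pointMass 0)
      (uniformEven m)).p := p_eq_of_forall_ne 0 fun k hk => by
    rw [hYp k hk, ht]
    simp [mix, pointMass, uniformEven, deltaFn, hk]
  refine ⟨?_, hL, fun n => congrFun hYeq n⟩
  field_simp at ht ⊢
  linarith
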